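/- The class 𝒟 of infinite binary words of the form 0^l(Ds) or 1^l(Ds), with l ≥ 0 and s Sturmian, is stable under the shift T: if w ∈ 𝒟 then Tw ∈ 𝒟. -/

import Mathlib

/-- A sequence (indexed from 1) over the alphabet {0,1}. -/
def IsBinary (s : ℕ → ℤ) : Prop := ∀ i, s i = 0 ∨ s i = 1

/-- `s` is a Sturmian word of slope `θ` (floor or ceiling form). -/
def IsSturmian (θ : ℝ) (s : ℕ → ℤ) : Prop :=
  Irrational θ ∧ θ ∈ Set.Ioo (0:ℝ) 1 ∧
    ∃ ρ : ℝ,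
      (∀ n : ℕ, 1 ≤ n → s n = ⌊((n:ℝ)+1)*θ+ρ⌋ - ⌊(n:ℝ)*θ+ρ⌋) ∨
      (∀ n : ℕ, 1 ≤ n → s n = ⌈((n:ℝ)+1)*θ+ρ⌉ - ⌈(n:ℝ)*θ+ρ⌉)

/-- The characteristic Sturmian word of slope `θ`. -/
noncomputable def charWord (θ : ℝ) : ℕ → ℤ := fun n => ⌊((n:ℝ)+1)*θ⌋ - ⌊(n:ℝ)*θ⌋

/-- `tval r s = ∑_{i ≥ 1} s i * r ^ i`. -/
noncomputable def tval (r : ℝ) (s : ℕ → ℤ) : ℝ := ∑' i : ℕ, (s (i+1) : ℝ) * r^(i+1)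

/-- Equality of infinite words (positions ≥ 1). -/
def EqW (s s' : ℕ → ℤ) : Prop := ∀ i, 1 ≤ i → s i = s' i

/-- Strict lexicographic order on infinite words (positions ≥ 1). -/
def LexLt (s s' : ℕ → ℤ) : Prop :=
  ∃ n, 1 ≤ n ∧ (∀ i, 1 ≤ i → i < n → s i = s' i) ∧ s n < s' n

def LexLe (s s' : ℕ → ℤ) : Prop := LexLt s s' ∨ EqW s s'

/-- Strict alternate order on infinite words. -/
def AltLt (s s' : ℕ → ℤ) : Prop :=
  ∃ n, 1 ≤ n ∧ (∀ i, 1 ≤ i → i < n → s i = s' i) ∧ (-1:ℤ)^n * (s' n - s n) = 1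

def AltLe (s s' : ℕ → ℤ) : Prop := AltLt s s' ∨ EqW s s'

/-- The doubling map `D(w₁w₂…) = w₁w₁w₂w₂…`. -/
def Dbl (w : ℕ → ℤ) : ℕ → ℤ := fun n => w ((n+1)/2)

/-- The shift map `T(w₁w₂w₃…) = w₂w₃…`. -/
def Shf (w : ℕ → ℤ) : ℕ → ℤ := fun n => w (n+1)

/-- The word `a^l s` : the letter `a` repeated `l` times followed by `s`. -/
def Prepend (a : ℤ) (l : ℕ) (s : ℕ → ℤ) : ℕ → ℤ := fun n => if n ≤ l then a else s (n - l)

/-- The finite word `u` followed by the infinite word `s`. -/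
def Cat (u : List ℤ) (s : ℕ → ℤ) : ℕ → ℤ :=
  fun n => if n ≤ u.length then u.getD (n-1) 0 else s (n - u.length)

/-- The finite word `u` occurs as a contiguous block of `s` (at a position ≥ 1). -/
def Subword (u : List ℤ) (s : ℕ → ℤ) : Prop :=
  ∃ n, 1 ≤ n ∧ ∀ i, i < u.length → s (n + i) = u.getD i 0

/-- `s` is aperiodic: not eventually periodic. -/
def Aperiodic (s : ℕ → ℤ) : Prop :=
  ¬ ∃ k, 1 ≤ k ∧ ∃ N, 1 ≤ N ∧ ∀ n, N ≤ n → s n = s (n + k)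

/-- `w` has slope `θ`: the averages of its letters tend to `θ`. -/
def HasSlope (w : ℕ → ℤ) (θ : ℝ) : Prop :=
  Filter.Tendsto (fun n : ℕ => (∑ i ∈ Finset.Icc 1 n, (w i : ℝ)) / n)
    Filter.atTop (nhds θ)

/-- The class `S` of words of the form `0^l s` or `1^l s` with `s` Sturmian. -/
def MemS (w : ℕ → ℤ) : Prop :=
  ∃ a l s θ, (a = (0:ℤ) ∨ a = 1) ∧ IsSturmian θ s ∧ EqW w (Prepend a l s)

/-- The class `𝒟` of words of the form `0^l (D s)` or `1^l (D s)` with `s` Sturmian. -/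
def MemD (w : ℕ → ℤ) : Prop :=
  ∃ a l s θ, (a = (0:ℤ) ∨ a = 1) ∧ IsSturmian θ s ∧ EqW w (Prepend a l (Dbl s))

/-- The class `𝒫 = D(Σ^ℕ) ∪ T(D(Σ^ℕ))` with `Σ = {0,1}`. -/
def MemP (w : ℕ → ℤ) : Prop :=
  (∃ u, IsBinary u ∧ EqW w (Dbl u)) ∨ (∃ u, IsBinary u ∧ EqW w (Shf (Dbl u)))

/-!
Shifting `a^(l+1) (D s)` just drops one leading `a`. Shifting `D s = s₁s₁s₂s₂…` leaves
`s₁ s₂s₂s₃s₃… = s₁ (D (T s))`, and `T s` is again Sturmian, of the same slope with intercept `ρ + θ`.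
-/

section FloorDifference

variable {α : Type*} [Ring α] [LinearOrder α] [IsStrictOrderedRing α] [FloorRing α]

lemma floor_add_sub_floor_eq_zero_or_one (x : α) {θ : α} (h0 : 0 ≤ θ) (h1 : θ < 1) :
    ⌊x + θ⌋ - ⌊x⌋ = 0 ∨ ⌊x + θ⌋ - ⌊x⌋ = 1 := by
  have hlo : ⌊x⌋ ≤ ⌊x + θ⌋ := Int.floor_le_floor (le_add_of_nonneg_right h0)
  have hhi : ⌊x + θ⌋ ≤ ⌊x⌋ + 1 := by
    rw [← Int.floor_add_one]; exact Int.floor_le_floor (by gcongr)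
  omega

lemma ceil_add_sub_ceil_eq_zero_or_one (x : α) {θ : α} (h0 : 0 ≤ θ) (h1 : θ < 1) :
    ⌈x + θ⌉ - ⌈x⌉ = 0 ∨ ⌈x + θ⌉ - ⌈x⌉ = 1 := by
  have hlo : ⌈x⌉ ≤ ⌈x + θ⌉ := Int.ceil_le_ceil (le_add_of_nonneg_right h0)
  have hhi : ⌈x + θ⌉ ≤ ⌈x⌉ + 1 := by
    rw [← Int.ceil_add_one]; exact Int.ceil_le_ceil (by gcongr)
  omega

end FloorDifference

namespace IsSturmian

variable {θ : ℝ} {s : ℕ → ℤ}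

lemma eq_zero_or_one (h : IsSturmian θ s) {n : ℕ} (hn : 1 ≤ n) : s n = 0 ∨ s n = 1 := by
  obtain ⟨-, ⟨hθ0, hθ1⟩, ρ, hs | hs⟩ := h
  all_goals
    rw [hs n hn, show ((n : ℝ) + 1) * θ + ρ = ((n : ℝ) * θ + ρ) + θ by ring]
  · exact floor_add_sub_floor_eq_zero_or_one _ hθ0.le hθ1
  · exact ceil_add_sub_ceil_eq_zero_or_one _ hθ0.le hθ1

lemma shf (h : IsSturmian θ s) : IsSturmian θ (Shf s) := by
  obtain ⟨hirr, hθ, ρ, hs | hs⟩ := h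
  · refine ⟨hirr, hθ, ρ + θ, Or.inl fun n _ => ?_⟩
    rw [Shf, hs (n + 1) (by omega)]
    push_cast; ring_nf
  · refine ⟨hirr, hθ, ρ + θ, Or.inr fun n _ => ?_⟩
    rw [Shf, hs (n + 1) (by omega)]
    push_cast; ring_nf

end IsSturmian

lemma EqW.shf {s s' : ℕ → ℤ} (h : EqW s s') : EqW (Shf s) (Shf s') :=
  fun i _ => h (i + 1) (by omega)

lemma shf_prepend_zero (a : ℤ) (s : ℕ → ℤ) : Shf (Prepend a 0 s) = Shf s := by
  funext n
  simp [Shf, Prepend]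

lemma shf_prepend_succ (a : ℤ) (m : ℕ) (s : ℕ → ℤ) :
    Shf (Prepend a (m + 1) s) = Prepend a m s := by
  funext n
  simp only [Shf, Prepend, Nat.add_le_add_iff_right, Nat.add_sub_add_right]

lemma shf_dbl (s : ℕ → ℤ) : Shf (Dbl s) = Prepend (s 1) 1 (Dbl (Shf s)) := by
  funext n
  simp only [Shf, Dbl, Prepend]
  split_ifs with hn
  · interval_cases n <;> rfl
  · congr 1; omega

theorem stmt11 (w : ℕ → ℤ) (hw : MemD w) : MemD (Shf w) := by
  obtain ⟨a, l, s, θ, ha, hs, hw⟩ := hw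
  have hT := hw.shf
  cases l with
  | zero =>
    rw [shf_prepend_zero, shf_dbl] at hT
    exact ⟨s 1, 1, Shf s, θ, hs.eq_zero_or_one le_rfl, hs.shf, hT⟩
  | succ m =>
    rw [shf_prepend_succ] at hT
    exact ⟨a, m, s, θ, ha, hs, hT⟩
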